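/- arXiv:math/9808017 — 2 statements merged into one kernel-verified Lean document; each statement's English description precedes it below -/
import Mathlib

section
/- Let B̄_{m,n}(x) = 2^{-mn-n(n+1)/2} (x+m+1)_n · [(x+1)(x+2)^2···(x+m-1)^2(x+m)] · [(x+3/2)(x+5/2)^2···(x+(2m-3)/2)^2(x+(2m-1)/2)] · ∏_{i=1}^m (x+i)_n/(x+i+1/2)_n · ∏_{i=1}^n (2x+m+i+1)_{m+i}, and let B_{m,n}(x) be as in the paper's formula (1.1). Then for every n ≥ 1, B̄_{n,n}(x)/B_{n,n-1}(x) = (x+1)_{2n}, as an identity of rational functions in x. -/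
/-- The rising factorial `(a)_j = a(a+1)···(a+j-1)`. -/
noncomputable def rfac {K : Type*} [Field K] (a : K) (j : ℕ) : K :=
  ∏ i ∈ Finset.range j, (a + i)

/-- The product `(x+2)(x+3)^2···(x+n-1)^2(x+n)`, whose bases grow by one from
factor to factor while the exponents increase by one up to the middle and then
decrease by one (empty for `n ≤ 1`). -/
noncomputable def tentInt {K : Type*} [Field K] (x : K) (n : ℕ) : K :=
  ∏ j ∈ Finset.Icc 2 n, (x + j) ^ (min (j - 1) (n + 1 - j))

/-- The product `(x+3/2)(x+5/2)^2···(x+(2n-1)/2)^2(x+(2n+1)/2)`, bases growing by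
one, exponents rising by one to the middle and then falling (empty for `n = 0`). -/
noncomputable def tentHalf {K : Type*} [Field K] (x : K) (n : ℕ) : K :=
  ∏ j ∈ Finset.Icc 1 n, (x + j + 1 / 2) ^ (min j (n + 1 - j))

/-- The product `(x+1)(x+2)^2···(x+m-1)^2(x+m)`, bases growing by one, exponents
rising by one to the middle and then falling (empty for `m = 0`). -/
noncomputable def tentIntBar {K : Type*} [Field K] (x : K) (m : ℕ) : K :=
  ∏ j ∈ Finset.Icc 1 m, (x + j) ^ (min j (m + 1 - j))

/-- The product `(x+3/2)(x+5/2)^2···(x+(2m-3)/2)^2(x+(2m-1)/2)`, bases growing by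
one, exponents rising by one to the middle and then falling (empty for `m ≤ 1`). -/
noncomputable def tentHalfBar {K : Type*} [Field K] (x : K) (m : ℕ) : K :=
  ∏ j ∈ Finset.Icc 1 (m - 1), (x + j + 1 / 2) ^ (min j (m - j))

/-- The polynomial `B_{m,n}(x)` of formula (1.1). -/
noncomputable def Bpoly {K : Type*} [Field K] (m n : ℕ) (x : K) : K :=
  ((2 : K) ^ (m * n + m * (m - 1) / 2))⁻¹ *
    rfac (x + n + 1) m * rfac (x + n + 2) m *
    tentInt x n * tentHalf x n *
    (∏ i ∈ Finset.Icc 1 n, rfac (x + i) m / rfac (x + i + 1 / 2) m) *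
    (∏ i ∈ Finset.Icc 1 m, rfac (2 * x + n + i + 2) (n + i - 1))

/-- The polynomial `B̄_{m,n}(x)` of formula (1.2). -/
noncomputable def Bbar {K : Type*} [Field K] (m n : ℕ) (x : K) : K :=
  ((2 : K) ^ (m * n + n * (n + 1) / 2))⁻¹ *
    rfac (x + m + 1) n *
    tentIntBar x m * tentHalfBar x m *
    (∏ i ∈ Finset.Icc 1 m, rfac (x + i) n / rfac (x + i + 1 / 2) n) *
    (∏ i ∈ Finset.Icc 1 n, rfac (2 * x + m + i + 1) (m + i))

/-!
Put `n = k + 1` and compare `B̄_{k+1,k+1}` with `B_{k+1,k}` factor by factor. The integer tent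
gains `(x+1)_{k+1}`, the quotient product gains `(x+k+1)_{k+1}/(x+k+3/2)_{k+1}`, and every factor
`(2x+k+i+2)_{k+i+1}` of the last product exceeds its counterpart `(2x+k+i+2)_{k+i-1}` by
`2(x+k+i+1/2) · 2(x+k+i+1)`; over `i = 1, …, k+1` these contribute
`4^{k+1} (x+k+3/2)_{k+1} (x+k+2)_{k+1}`. The half-integer rising factorial cancels the new
denominator, `4^{k+1}` cancels the change of the power of `2`, and what is left is
`(x+1)_{k+1} (x+k+2)_{k+1} = (x+1)_{2k+2}`. Over `ℚ(X)` nothing vanishes, since every linear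
factor is `X + q` or `2X + q` with `q` rational.
-/

section RisingFactorial

variable {K : Type*} [Field K]

theorem rfac_add (a : K) (m k : ℕ) : rfac a (m + k) = rfac a m * rfac (a + m) k := by
  simp only [rfac, Finset.prod_range_add, Nat.cast_add, add_assoc]

theorem rfac_add_two (a : K) (m : ℕ) : rfac a (m + 2) = rfac a m * ((a + m) * (a + m + 1)) := by
  simp only [rfac, Finset.prod_range_succ]
  push_cast
  ring

theorem prod_Icc_one_add_eq_rfac (a : K) (m : ℕ) :
    ∏ i ∈ Finset.Icc 1 m, (a + i) = rfac (a + 1) m := by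
  rw [rfac, Finset.range_eq_Ico, ← Finset.Ico_add_one_right_eq_Icc]
  have hshift := Finset.prod_Ico_add' (fun j : ℕ => a + j) 0 m 1
  simp only [zero_add, Nat.cast_add, Nat.cast_one] at hshift
  rw [← hshift]
  exact Finset.prod_congr rfl fun i _ => by ring

theorem rfac_ne_zero {a : K} {m : ℕ} (h : ∀ i < m, a + i ≠ 0) : rfac a m ≠ 0 :=
  Finset.prod_ne_zero_iff.mpr fun i hi => h i (Finset.mem_range.mp hi)

end RisingFactorial

section Tents

variable {K : Type*} [Field K]

theorem tentHalfBar_succ (x : K) (k : ℕ) : tentHalfBar x (k + 1) = tentHalf x k := by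
  simp only [tentHalfBar, tentHalf, Nat.add_sub_cancel]

theorem tentIntBar_succ (x : K) (k : ℕ) :
    tentIntBar x (k + 1) = rfac (x + 1) (k + 1) * tentInt x k := by
  have hexp : ∀ j ∈ Finset.Icc 1 (k + 1), (x + j) ^ min j (k + 1 + 1 - j) =
      (x + j) * (x + j) ^ min (j - 1) (k + 1 - j) := by
    intro j hj
    rw [Finset.mem_Icc] at hj
    rw [← pow_succ', show min (j - 1) (k + 1 - j) + 1 = min j (k + 1 + 1 - j) by omega]
  have hvanish : ∀ j ∈ Finset.Icc 1 (k + 1), j ∉ Finset.Icc 2 k →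
      (x + j) ^ min (j - 1) (k + 1 - j) = 1 := by
    intro j hj hj'
    rw [Finset.mem_Icc] at hj hj'
    rw [show min (j - 1) (k + 1 - j) = 0 by omega, pow_zero]
  rw [tentIntBar, Finset.prod_congr rfl hexp, Finset.prod_mul_distrib, prod_Icc_one_add_eq_rfac,
    tentInt, ← Finset.prod_subset (Finset.Icc_subset_Icc one_le_two k.le_succ) hvanish]

theorem prod_rfac_two_mul_add_succ (h2 : (2 : K) ≠ 0) (x : K) (k : ℕ) :
    ∏ i ∈ Finset.Icc 1 (k + 1), rfac (2 * x + (k + 1 : ℕ) + i + 1) (k + 1 + i) =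
      (∏ i ∈ Finset.Icc 1 (k + 1), rfac (2 * x + k + i + 2) (k + i - 1)) *
        (2 ^ (k + 1) * rfac (x + (k + 1 : ℕ) + 1 / 2) (k + 1)) *
        (2 ^ (k + 1) * rfac (x + k + 2) (k + 1)) := by
  have hterm : ∀ i ∈ Finset.Icc 1 (k + 1), rfac (2 * x + (k + 1 : ℕ) + i + 1) (k + 1 + i) =
      rfac (2 * x + k + i + 2) (k + i - 1) * (2 * (x + k + 1 / 2 + i)) * (2 * (x + k + 1 + i)) := by
    intro i hi
    rw [Finset.mem_Icc] at hi
    have hbase : 2 * x + ((k + 1 : ℕ) : K) + i + 1 = 2 * x + k + i + 2 := by push_cast; ring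
    rw [hbase, show k + 1 + i = k + i - 1 + 2 by omega, rfac_add_two, Nat.cast_sub (by omega),
      Nat.cast_add, Nat.cast_one]
    field_simp
    ring
  rw [Finset.prod_congr rfl hterm, Finset.prod_mul_distrib, Finset.prod_mul_distrib,
    Finset.prod_mul_distrib, Finset.prod_mul_distrib, Finset.prod_const, Nat.card_Icc,
    Nat.add_sub_cancel, prod_Icc_one_add_eq_rfac, prod_Icc_one_add_eq_rfac]
  rw [Nat.cast_succ, show x + k + 1 / 2 + 1 = x + (k + 1) + 1 / 2 by ring,
    show x + k + 1 + 1 = x + k + 2 by ring]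

theorem Bbar_succ_succ_eq_rfac_mul_Bpoly (h2 : (2 : K) ≠ 0) (x : K) (k : ℕ)
    (hv : rfac (x + (k + 1 : ℕ) + 1 / 2) (k + 1) ≠ 0) :
    Bbar (k + 1) (k + 1) x = rfac (x + 1) (2 * (k + 1)) * Bpoly (k + 1) k x := by
  have hexp : (k + 1) * (k + 1) + (k + 1) * (k + 1 + 1) / 2 =
      (k + 1) * k + (k + 1) * (k + 1 - 1) / 2 + ((k + 1) + (k + 1)) := by
    rw [Nat.add_sub_cancel, show (k + 1) * (k + 1 + 1) = (k + 1) * k + (k + 1) * 2 by ring,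
      Nat.add_mul_div_right _ _ two_pos]
    ring
  have hsplit : rfac (x + 1) (2 * (k + 1)) = rfac (x + 1) (k + 1) * rfac (x + k + 2) (k + 1) := by
    rw [two_mul, rfac_add]
    congr 2
    push_cast
    ring
  have hquot : ∏ i ∈ Finset.Icc 1 (k + 1), rfac (x + i) (k + 1) / rfac (x + i + 1 / 2) (k + 1) =
      (∏ i ∈ Finset.Icc 1 k, rfac (x + i) (k + 1) / rfac (x + i + 1 / 2) (k + 1)) *
        (rfac (x + (k + 1 : ℕ)) (k + 1) / rfac (x + (k + 1 : ℕ) + 1 / 2) (k + 1)) :=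
    Finset.prod_Icc_succ_top (by omega) _
  have hbase : x + ((k + 1 : ℕ) : K) + 1 = x + k + 2 := by push_cast; ring
  have hbase' : x + ((k + 1 : ℕ) : K) = x + k + 1 := by push_cast; ring
  rw [Bbar, Bpoly, tentIntBar_succ, tentHalfBar_succ, hquot, prod_rfac_two_mul_add_succ h2, hsplit,
    hexp, Nat.add_sub_cancel, pow_add, pow_add (2 : K) (k + 1) (k + 1)]
  generalize rfac (x + (k + 1 : ℕ) + 1 / 2) (k + 1) = V at hv ⊢
  rw [hbase, hbase']
  field_simp

end Tents

section NonVanishing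

variable {K : Type*} [Field K] [CharZero K] {x : K}

theorem rfac_add_ratCast_ne_zero (hx : ∀ q : ℚ, x + q ≠ 0) (q : ℚ) (m : ℕ) :
    rfac (x + q) m ≠ 0 :=
  rfac_ne_zero fun i _ => by simpa [add_assoc] using hx (q + i)

theorem rfac_two_mul_add_ratCast_ne_zero (hx : ∀ q : ℚ, x + q ≠ 0) (q : ℚ) (m : ℕ) :
    rfac (2 * x + q) m ≠ 0 :=
  rfac_ne_zero fun i _ h => hx ((q + i) / 2) (by push_cast; linear_combination h / 2)

theorem Bpoly_ne_zero (hx : ∀ q : ℚ, x + q ≠ 0) (m n : ℕ) : Bpoly m n x ≠ 0 := by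
  have hshift : ∀ a b : ℚ, rfac (x + a + b) m ≠ 0 := fun a b => by
    simpa [add_assoc] using rfac_add_ratCast_ne_zero hx (a + b) m
  refine mul_ne_zero (mul_ne_zero (mul_ne_zero (mul_ne_zero (mul_ne_zero (mul_ne_zero
    (inv_ne_zero (pow_ne_zero _ two_ne_zero)) ?_) ?_) ?_) ?_) ?_) ?_
  · exact_mod_cast hshift n 1
  · exact_mod_cast hshift n 2
  · exact Finset.prod_ne_zero_iff.mpr fun j _ => pow_ne_zero _ (by exact_mod_cast hx j)
  · exact Finset.prod_ne_zero_iff.mpr fun j _ =>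
      pow_ne_zero _ (by simpa [add_assoc] using hx (j + 1 / 2))
  · exact Finset.prod_ne_zero_iff.mpr fun i _ =>
      div_ne_zero (by exact_mod_cast rfac_add_ratCast_ne_zero hx i m)
        (by simpa using hshift i (1 / 2))
  · exact Finset.prod_ne_zero_iff.mpr fun i _ => by
      simpa [add_assoc] using rfac_two_mul_add_ratCast_ne_zero hx (n + i + 2) (n + i - 1)

end NonVanishing

theorem RatFunc.X_add_ratCast_ne_zero (q : ℚ) : (RatFunc.X : RatFunc ℚ) + q ≠ 0 := by
  have h : (RatFunc.X : RatFunc ℚ) + q =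
      algebraMap (Polynomial ℚ) (RatFunc ℚ) (Polynomial.X + Polynomial.C q) := by
    rw [map_add, RatFunc.algebraMap_X, RatFunc.algebraMap_C, eq_ratCast RatFunc.C]
  exact h ▸ RatFunc.algebraMap_ne_zero (Polynomial.X_add_C_ne_zero q)

/-- Identity (5.11): for `n ≥ 1`, `B̄_{n,n}(x)/B_{n,n-1}(x) = (x+1)_{2n}`,
as rational functions in `x`. -/
theorem Bbar_div_B (n : ℕ) (hn : 1 ≤ n) :
    Bbar n n (RatFunc.X : RatFunc ℚ) / Bpoly n (n - 1) (RatFunc.X : RatFunc ℚ) =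
      rfac ((RatFunc.X : RatFunc ℚ) + 1) (2 * n) := by
  obtain ⟨k, rfl⟩ := Nat.exists_eq_add_of_le' hn
  have hx := RatFunc.X_add_ratCast_ne_zero
  have hv : rfac ((RatFunc.X : RatFunc ℚ) + (k + 1 : ℕ) + 1 / 2) (k + 1) ≠ 0 := by
    simpa [add_assoc] using rfac_add_ratCast_ne_zero hx (k + 1 + 1 / 2) (k + 1)
  rw [Nat.add_sub_cancel, div_eq_iff (Bpoly_ne_zero hx _ _),
    Bbar_succ_succ_eq_rfac_mul_Bpoly two_ne_zero _ _ hv]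
end

section
/- For strictly increasing positive integer lists l=(l_1,...,l_m) with m ≥ 2 and q=(q_1,...,q_n), the polynomial P_{l,q}(x) of the paper satisfies P_{l,q}(0) = P_{l^{(m)},q}(l_m - l_{m-1} - 1), where l^{(m)} denotes l with its last entry removed. -/
/-- The constant `c_{l,q}` of formula (1.3):
`c_{l,q} = 2^{C(n-m,2)-m} ∏_{i=1}^m 1/(2l_i)! ∏_{i=1}^n 1/(2q_i-1)!
  · ∏_{i<j}(l_j-l_i) ∏_{i<j}(q_j-q_i) / ∏_{i,j}(l_i+q_j)`,
where `C(a,2) = a(a-1)/2` for any integer `a`. -/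
noncomputable def cConst (l q : ℕ → ℕ) (m n : ℕ) : ℚ :=
  (2 : ℚ) ^ ((((n : ℤ) - m) * ((n : ℤ) - m - 1)) / 2 - m) *
    (∏ i ∈ Finset.Icc 1 m, ((Nat.factorial (2 * l i) : ℚ))⁻¹) *
    (∏ i ∈ Finset.Icc 1 n, ((Nat.factorial (2 * q i - 1) : ℚ))⁻¹) *
    ((∏ i ∈ Finset.Icc 1 m, ∏ j ∈ Finset.Icc (i + 1) m, ((l j : ℚ) - l i)) *
      (∏ i ∈ Finset.Icc 1 n, ∏ j ∈ Finset.Icc (i + 1) n, ((q j : ℚ) - q i))) /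
    (∏ i ∈ Finset.Icc 1 m, ∏ j ∈ Finset.Icc 1 n, ((l i : ℚ) + q j))

/-- The polynomial `P_{l,q}(x)` in the form of formula (5.1):
`P_{l,q}(x) = c_{l,q} · B_{m,n}(x+l_m-m)
  · ∏_{i=1}^m ∏_{j=i}^{l_i-1} (x+l_m-j)(x+l_m-m+n+j+2)
  · ∏_{i=1}^n ∏_{j=i}^{q_i-1} (x+l_m-m+n-j+1)(x+l_m+j+1)`. -/
noncomputable def Ppoly (l q : ℕ → ℕ) (m n : ℕ) (x : ℚ) : ℚ :=
  cConst l q m n * Bpoly m n (x + l m - m) *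
    (∏ i ∈ Finset.Icc 1 m, ∏ j ∈ Finset.Icc i (l i - 1),
      (x + l m - j) * (x + l m - m + n + j + 2)) *
    (∏ i ∈ Finset.Icc 1 n, ∏ j ∈ Finset.Icc i (q i - 1),
      (x + l m - m + n - j + 1) * (x + l m + j + 1))

/-!
Write `L = l_m`. Both sides are `c · B(L - m) · (l-rows) · (q-rows)`, the left one at `X = L`
with `m` rows, the right one at `X = L - 1` with `m - 1` rows. Passing from `m - 1` to `m`
multiplies `c_{l,q}` by `2^{m-1-n} ∏_{i<m} (L - l_i) / ((2L)! ∏_j (L + q_j))` and `B` by an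
explicit factor. Shifting `X` by one telescopes each row: the `i`-th `l`-row gains
`(L - i)/(L - l_i)` and the `i`-th `q`-row gains `(L + q_i)/(L + i)`, so every `l_i` and `q_j`
cancels. The new top row together with `∏_{i<m} (L - i)` gives `(L-1)! (L+n+2)_{L-m}`, and what
is left is an identity between factorials and rising factorials in which both sides equal
`(2L+2n)!`.
-/

open Finset
open scoped Nat

section RisingFactorial

variable {K : Type*} [Field K]

lemma rfac_succ (a : K) (k : ℕ) : rfac a (k + 1) = rfac a k * (a + k) :=
  prod_range_succ _ _

lemma rfac_natCast (a k : ℕ) : rfac (a : K) k = (a.ascFactorial k : K) := by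
  simp [rfac, Nat.ascFactorial_eq_prod_range]

lemma prod_Icc_add_eq_rfac (c : K) (a b : ℕ) :
    ∏ j ∈ Icc a b, (c + j) = rfac (c + a) (b + 1 - a) := by
  rw [← Ico_add_one_right_eq_Icc, prod_Ico_eq_prod_range, rfac]
  refine prod_congr rfl fun i _ => ?_
  push_cast; ring

lemma prod_Icc_one_add_eq_rfac_s16 (c : K) (n : ℕ) : ∏ j ∈ Icc 1 n, (c + j) = rfac (c + 1) n := by
  rw [prod_Icc_add_eq_rfac, Nat.cast_one, Nat.add_sub_cancel]

lemma rfac_add_half_mul_rfac_add_one [CharZero K] (a : K) (k : ℕ) :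
    4 ^ k * rfac (a + 1 / 2) k * rfac (a + 1) k = rfac (2 * a + 1) (2 * k) := by
  induction k with
  | zero => simp [rfac]
  | succ k ih =>
    rw [show 2 * (k + 1) = 2 * k + 1 + 1 by ring, rfac_succ, rfac_succ, rfac_succ, rfac_succ, ← ih]
    push_cast
    ring

lemma factorial_mul_rfac (a k : ℕ) : (a ! : K) * rfac (a + 1 : K) k = ((a + k)! : K) := by
  rw [← Nat.factorial_mul_ascFactorial, ← Nat.cast_add_one, rfac_natCast]
  push_cast; ring

end RisingFactorial

lemma prod_Ico_mul_eq_mul_prod_Ico_succ {M : Type*} [CommMonoid M] (f : ℕ → M) {a b : ℕ}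
    (hab : a ≤ b) : (∏ j ∈ Ico a b, f j) * f b = f a * ∏ j ∈ Ico a b, f (j + 1) := by
  rw [← prod_Ico_succ_top hab, prod_eq_prod_Ico_succ_bot (Nat.lt_succ_of_le hab), prod_Ico_add']

lemma prod_Icc_prod_Icc_succ_top {M : Type*} [CommMonoid M] (f : ℕ → ℕ → M) (N : ℕ) :
    ∏ i ∈ Icc 1 (N + 1), ∏ j ∈ Icc (i + 1) (N + 1), f i j =
      (∏ i ∈ Icc 1 N, ∏ j ∈ Icc (i + 1) N, f i j) * ∏ i ∈ Icc 1 N, f i (N + 1) := by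
  rw [prod_Icc_succ_top (by omega), Icc_eq_empty_of_lt (Nat.lt_succ_self _), prod_empty, mul_one,
    ← prod_mul_distrib]
  exact prod_congr rfl fun i hi => prod_Icc_succ_top (by grind) _

lemma prod_Ico_one_sub_eq_factorial {R : Type*} [CommRing R] (N : ℕ) :
    ∏ j ∈ Ico 1 (N + 1), ((N + 1 : ℕ) - j : R) = N ! := by
  rw [prod_Ico_eq_prod_range, Nat.add_sub_cancel, ← Nat.descFactorial_self,
    Nat.descFactorial_eq_prod_range, Nat.cast_prod]
  refine prod_congr rfl fun k hk => ?_
  rw [Nat.cast_sub (mem_range.1 hk).le]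
  push_cast; ring

noncomputable def BpolySuccFactor {K : Type*} [Field K] (M n : ℕ) (x : K) : K :=
  (2 ^ (n + M))⁻¹ * (x + n + M + 1) * (x + n + M + 2) * rfac (x + M + 1) n /
    rfac (x + M + 1 + 1 / 2) n * rfac (2 * x + n + M + 3) (n + M)

lemma Bpoly_succ {K : Type*} [Field K] (M n : ℕ) (x : K) :
    Bpoly (M + 1) n x = Bpoly M n x * BpolySuccFactor M n x := by
  have hexp : (M + 1) * n + (M + 1) * (M + 1 - 1) / 2 = M * n + M * (M - 1) / 2 + (n + M) := by
    have : (M + 1) * (M + 1 - 1) = M * (M - 1) + M * 2 := by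
      cases M with
      | zero => rfl
      | succ M => simp only [Nat.add_sub_cancel]; ring
    rw [this, Nat.add_mul_div_right _ _ two_pos]
    ring
  have hint : ∏ i ∈ Icc 1 n, (x + i + M) = rfac (x + M + 1) n := by
    rw [← prod_Icc_one_add_eq_rfac_s16]
    exact prod_congr rfl fun i _ => by ring
  have hhalf : ∏ i ∈ Icc 1 n, (x + i + 1 / 2 + M) = rfac (x + M + 1 + 1 / 2) n := by
    rw [show x + M + 1 + 1 / 2 = x + M + 1 / 2 + 1 by ring, ← prod_Icc_one_add_eq_rfac_s16]
    exact prod_congr rfl fun i _ => by ring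
  have hmid : ∏ i ∈ Icc 1 n, rfac (x + i) (M + 1) / rfac (x + i + 1 / 2) (M + 1) =
      (∏ i ∈ Icc 1 n, rfac (x + i) M / rfac (x + i + 1 / 2) M) *
        (rfac (x + M + 1) n / rfac (x + M + 1 + 1 / 2) n) := by
    rw [← hint, ← hhalf, ← prod_div_distrib, ← prod_mul_distrib]
    exact prod_congr rfl fun i _ => by rw [rfac_succ, rfac_succ, mul_div_mul_comm]
  have hlast : ∏ i ∈ Icc 1 (M + 1), rfac (2 * x + n + i + 2) (n + i - 1) =
      (∏ i ∈ Icc 1 M, rfac (2 * x + n + i + 2) (n + i - 1)) * rfac (2 * x + n + M + 3) (n + M) := by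
    rw [prod_Icc_succ_top (by omega), show n + (M + 1) - 1 = n + M by omega]
    push_cast; ring_nf
  rw [Bpoly, Bpoly, BpolySuccFactor, hexp, pow_add, mul_inv, rfac_succ (x + n + 1),
    rfac_succ (x + n + 2), hmid, hlast]
  ring

lemma cConst_succ (l q : ℕ → ℕ) (M n : ℕ) :
    cConst l q (M + 1) n = cConst l q M n * (2 ^ ((M : ℤ) - n) / ((2 * l (M + 1))! : ℚ) *
      (∏ i ∈ Icc 1 M, ((l (M + 1) : ℚ) - l i)) / ∏ j ∈ Icc 1 n, ((l (M + 1) : ℚ) + q j)) := by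
  have hexp : ((n : ℤ) - ↑(M + 1)) * ((n : ℤ) - ↑(M + 1) - 1) / 2 - ↑(M + 1) =
      ((n : ℤ) - M) * ((n : ℤ) - M - 1) / 2 - M + (M - n) := by
    rw [show ((n : ℤ) - ↑(M + 1)) * ((n : ℤ) - ↑(M + 1) - 1) =
        ((n : ℤ) - M) * ((n : ℤ) - M - 1) + -((n : ℤ) - M - 1) * 2 by push_cast; ring,
      Int.add_mul_ediv_right _ _ two_ne_zero]
    push_cast; ring
  rw [cConst, cConst, hexp, zpow_add₀ two_ne_zero, prod_Icc_succ_top (by omega),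
    prod_Icc_prod_Icc_succ_top, prod_Icc_succ_top (a := 1) (by omega)]
  ring

section Rows

variable {R : Type*} [CommRing R]

lemma prod_Icc_sub_mul_shift (X : R) (g : ℕ → R) {i s : ℕ} (hi : 1 ≤ i) (his : i ≤ s) :
    (∏ j ∈ Icc i (s - 1), (X - j) * g j) * (X - s) =
      (X - i) * ∏ j ∈ Icc i (s - 1), (X - 1 - j) * g j := by
  obtain ⟨k, rfl⟩ : ∃ k, s = k + 1 := ⟨s - 1, by omega⟩
  have key := prod_Ico_mul_eq_mul_prod_Ico_succ (fun j : ℕ => X - j) his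
  simp only [Nat.cast_add_one, sub_add_eq_sub_sub, sub_right_comm X _ (1 : R)] at key
  simp only [Nat.add_sub_cancel, ← Ico_add_one_right_eq_Icc, prod_mul_distrib, Nat.cast_add_one]
  linear_combination (∏ j ∈ Ico i (k + 1), g j) * key

lemma prod_Icc_mul_add_shift (X : R) (g : ℕ → R) {i s : ℕ} (hi : 1 ≤ i) (his : i ≤ s) :
    (∏ j ∈ Icc i (s - 1), g j * (X + j + 1)) * (X + i) =
      (∏ j ∈ Icc i (s - 1), g j * (X + j)) * (X + s) := by
  obtain ⟨k, rfl⟩ : ∃ k, s = k + 1 := ⟨s - 1, by omega⟩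
  have key := prod_Ico_mul_eq_mul_prod_Ico_succ (fun j : ℕ => X + j) his
  simp only [Nat.cast_add_one, ← add_assoc] at key
  simp only [Nat.add_sub_cancel, ← Ico_add_one_right_eq_Icc, prod_mul_distrib, Nat.cast_add_one]
  linear_combination (∏ j ∈ Ico i (k + 1), g j) * key.symm

def lProd (l : ℕ → ℕ) (m n : ℕ) (X : R) : R :=
  ∏ i ∈ Icc 1 m, ∏ j ∈ Icc i (l i - 1), (X - j) * (X - m + n + j + 2)

def qProd (q : ℕ → ℕ) (m n : ℕ) (X : R) : R :=
  ∏ i ∈ Icc 1 n, ∏ j ∈ Icc i (q i - 1), (X - m + n - j + 1) * (X + j + 1)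

lemma lProd_succ_mul {l : ℕ → ℕ} {M : ℕ} (n : ℕ) (hl : ∀ i ∈ Icc 1 M, i ≤ l i) (X : R) :
    lProd l (M + 1) n X * ∏ i ∈ Icc 1 M, (X - l i) =
      lProd l M n (X - 1) * ((∏ i ∈ Icc 1 M, (X - i)) *
        ∏ j ∈ Icc (M + 1) (l (M + 1) - 1), (X - j) * (X - ↑(M + 1) + n + j + 2)) := by
  have hrow : ∀ i ∈ Icc 1 M,
      (∏ j ∈ Icc i (l i - 1), (X - j) * (X - ↑(M + 1) + n + j + 2)) * (X - l i) =
        (X - i) * ∏ j ∈ Icc i (l i - 1), (X - 1 - j) * (X - 1 - M + n + j + 2) := by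
    intro i hi
    rw [prod_Icc_sub_mul_shift _ _ (mem_Icc.1 hi).1 (hl i hi)]
    congr 1
    exact prod_congr rfl fun j _ => by push_cast; ring
  rw [lProd, lProd, prod_Icc_succ_top (by omega), mul_right_comm, ← prod_mul_distrib,
    prod_congr rfl hrow, prod_mul_distrib]
  ring

lemma qProd_succ_mul {q : ℕ → ℕ} {n : ℕ} (M : ℕ) (hq : ∀ i ∈ Icc 1 n, i ≤ q i) (X : R) :
    qProd q (M + 1) n X * ∏ i ∈ Icc 1 n, (X + i) =
      qProd q M n (X - 1) * ∏ i ∈ Icc 1 n, (X + q i) := by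
  rw [qProd, qProd, ← prod_mul_distrib, ← prod_mul_distrib]
  refine prod_congr rfl fun i hi => ?_
  rw [prod_Icc_mul_add_shift _ _ (mem_Icc.1 hi).1 (hq i hi)]
  congr 1
  exact prod_congr rfl fun j _ => by push_cast; ring

end Rows

lemma Ppoly_eq (l q : ℕ → ℕ) (m n : ℕ) (x : ℚ) :
    Ppoly l q m n x = cConst l q m n * Bpoly m n (x + l m - m) * lProd l m n (x + l m) *
      qProd q m n (x + l m) :=
  rfl

section TopRow

variable {K : Type*} [Field K]

lemma prod_Icc_sub_mul_top_row_eq (M n L : ℕ) (hL : M + 1 ≤ L) :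
    (∏ i ∈ Icc 1 M, ((L : K) - i)) *
        ∏ j ∈ Icc (M + 1) (L - 1), ((L : K) - j) * (L - ↑(M + 1) + n + j + 2) =
      ((L - 1)! : K) * rfac ((L : K) + n + 2) (L - (M + 1)) := by
  obtain ⟨t, rfl⟩ := Nat.exists_eq_add_of_le hL
  have hfac : (∏ i ∈ Icc 1 M, ((↑(M + 1 + t) : K) - i)) *
      ∏ j ∈ Icc (M + 1) (M + 1 + t - 1), ((↑(M + 1 + t) : K) - j) = (M + t)! := by
    rw [show M + 1 + t - 1 = M + t by omega, ← Ico_add_one_right_eq_Icc,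
      ← Ico_add_one_right_eq_Icc, prod_Ico_consecutive _ (by omega) (by omega),
      show M + 1 + t = M + t + 1 by ring]
    exact prod_Ico_one_sub_eq_factorial _
  have hrfac : ∏ j ∈ Icc (M + 1) (M + 1 + t - 1), ((↑(M + 1 + t) : K) - ↑(M + 1) + n + j + 2) =
      rfac ((↑(M + 1 + t) : K) + n + 2) t := by
    rw [show M + 1 + t - 1 = M + t by omega]
    trans ∏ j ∈ Icc (M + 1) (M + t), ((t + n + 2 : K) + j)
    · exact prod_congr rfl fun j _ => by push_cast; ring
    rw [prod_Icc_add_eq_rfac, show M + t + 1 - (M + 1) = t by omega]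
    push_cast; ring_nf
  rw [prod_mul_distrib, ← mul_assoc, hfac, hrfac, show M + 1 + t - 1 = M + t by omega,
    show M + 1 + t - (M + 1) = t by omega]

/-- With `L = M + 1 + t`, both sides are `(2L + 2n)!`: on the left the rising factorials chain
`(L-1)!` up to it, on the right the duplication formula turns `(L+1/2)_n (L+1)_n` into
`(2L+1)_{2n} / 4^n`. -/
lemma two_zpow_mul_BpolySuccFactor_mul [CharZero K] (M n L : ℕ) (hL : M + 1 ≤ L) :
    (2 : K) ^ ((M : ℤ) - n) * BpolySuccFactor M n ((L : K) - ↑(M + 1)) *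
        ((L - 1)! * rfac ((L : K) + n + 2) (L - (M + 1))) =
      (2 * L)! * ∏ i ∈ Icc 1 n, ((L : K) + i) := by
  obtain ⟨t, rfl⟩ := Nat.exists_eq_add_of_le hL
  rw [prod_Icc_one_add_eq_rfac_s16, BpolySuccFactor, zpow_sub₀ two_ne_zero, zpow_natCast, zpow_natCast,
    show M + 1 + t - 1 = M + t by omega, show M + 1 + t - (M + 1) = t by omega,
    show ((M + 1 + t : ℕ) : K) - ↑(M + 1) = t by push_cast; ring]
  have hsucc : ((M + t + n)! : K) * ((t + n + M + 1) * (t + n + M + 2)) = (M + t + n + 2)! := by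
    rw [Nat.factorial_succ (M + t + n + 1), Nat.factorial_succ]; push_cast; ring
  have hchain : ((M + t)! : K) * rfac ((t : K) + M + 1) n * ((t + n + M + 1) * (t + n + M + 2)) *
      rfac ((M + 1 + t : ℕ) + n + 2 : K) t * rfac (2 * (t : K) + n + M + 3) (n + M) =
      (2 * (M + 1 + t) + 2 * n)! := by
    rw [show (t : K) + M + 1 = (M + t : ℕ) + 1 by push_cast; ring,
      show ((M + 1 + t : ℕ) : K) + n + 2 = (M + t + n + 2 : ℕ) + 1 by push_cast; ring,
      show 2 * (t : K) + n + M + 3 = (M + t + n + 2 + t : ℕ) + 1 by push_cast; ring,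
      factorial_mul_rfac, hsucc, factorial_mul_rfac, factorial_mul_rfac]
    congr 2; ring
  have hdouble : ((2 * (M + 1 + t))! : K) * (4 ^ n * rfac ((t : K) + M + 1 + 1 / 2) n *
      rfac ((M + 1 + t : ℕ) + 1 : K) n) = (2 * (M + 1 + t) + 2 * n)! := by
    rw [show (t : K) + M + 1 = (M + 1 + t : ℕ) by push_cast; ring,
      rfac_add_half_mul_rfac_add_one, ← factorial_mul_rfac]
    push_cast; ring_nf
  have hne : rfac ((t : K) + M + 1 + 1 / 2) n ≠ 0 := by
    have : ((2 * (M + 1 + t) + 2 * n)! : K) ≠ 0 := Nat.cast_ne_zero.2 (Nat.factorial_ne_zero _)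
    rw [← hdouble] at this
    exact right_ne_zero_of_mul (left_ne_zero_of_mul (right_ne_zero_of_mul this))
  calc _ = 2 ^ M / (2 ^ n * 2 ^ (n + M)) / rfac ((t : K) + M + 1 + 1 / 2) n *
        (((M + t)! : K) * rfac ((t : K) + M + 1) n * ((t + n + M + 1) * (t + n + M + 2)) *
          rfac ((M + 1 + t : ℕ) + n + 2 : K) t * rfac (2 * (t : K) + n + M + 3) (n + M)) := by
        ring
    _ = _ := by
        rw [hchain, ← hdouble]
        generalize rfac ((t : K) + M + 1 + 1 / 2) n = A at hne ⊢
        rw [show (4 : K) ^ n = 2 ^ n * 2 ^ n by rw [← mul_pow]; norm_num]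
        field_simp
        ring

end TopRow

lemma self_le_of_pos_of_lt_succ {a : ℕ → ℕ} {m : ℕ} (hpos : ∀ i, 1 ≤ i → i ≤ m → 1 ≤ a i)
    (hmono : ∀ i, 1 ≤ i → i < m → a i < a (i + 1)) : ∀ i ∈ Icc 1 m, i ≤ a i := by
  intro i hi
  obtain ⟨h1, hm⟩ := mem_Icc.1 hi
  clear hi
  induction i, h1 using Nat.le_induction with
  | base => exact hpos 1 le_rfl hm
  | succ k hk ih => have := hmono k hk (by omega); have := ih (by omega); omega

/-- Third equality of Lemma 5.3: for strictly increasing positive lists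
`l = (l_1,...,l_m)` with `m ≥ 2` and `q = (q_1,...,q_n)`,
`P_{l,q}(0) = P_{l^{(m)},q}(l_m - l_{m-1} - 1)`. -/
theorem Ppoly_boundary_l (m n : ℕ) (l q : ℕ → ℕ) (hm : 2 ≤ m)
    (hlpos : ∀ i, 1 ≤ i → i ≤ m → 1 ≤ l i)
    (hlmono : ∀ i, 1 ≤ i → i < m → l i < l (i + 1))
    (hqpos : ∀ i, 1 ≤ i → i ≤ n → 1 ≤ q i)
    (hqmono : ∀ i, 1 ≤ i → i < n → q i < q (i + 1)) :
    Ppoly l q m n 0 = Ppoly l q (m - 1) n ((l m : ℚ) - l (m - 1) - 1) := by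
  obtain ⟨M, rfl⟩ : ∃ M, m = M + 1 := ⟨m - 1, by omega⟩
  have hl := self_le_of_pos_of_lt_succ hlpos hlmono
  have hLM : M + 1 ≤ l (M + 1) := hl _ (right_mem_Icc.2 (by omega))
  have hA := lProd_succ_mul n (fun i hi => hl i (Icc_subset_Icc_right M.le_succ hi))
    (l (M + 1) : ℚ)
  rw [prod_Icc_sub_mul_top_row_eq M n _ hLM] at hA
  have hQ := qProd_succ_mul M (self_le_of_pos_of_lt_succ hqpos hqmono) (l (M + 1) : ℚ)
  have hS := two_zpow_mul_BpolySuccFactor_mul (K := ℚ) M n _ hLM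
  have hPq : ∏ j ∈ Icc 1 n, ((l (M + 1) : ℚ) + q j) ≠ 0 :=
    prod_ne_zero_iff.2 fun j _ => by norm_cast; omega
  have hF : ((2 * l (M + 1))! : ℚ) ≠ 0 := by positivity
  rw [Nat.add_sub_cancel, Ppoly_eq, Ppoly_eq, zero_add,
    show (l (M + 1) : ℚ) - l M - 1 + l M = l (M + 1) - 1 by ring,
    show (l (M + 1) : ℚ) - 1 - M = l (M + 1) - ↑(M + 1) by push_cast; ring, cConst_succ, Bpoly_succ]
  field_simp
  set L : ℚ := (l (M + 1) : ℚ)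
  set c := cConst l q M n
  set B := Bpoly M n (L - ↑(M + 1))
  set ρ := BpolySuccFactor M n (L - ↑(M + 1))
  linear_combination (c * 2 ^ ((M : ℤ) - n) * ρ * B * qProd q (M + 1) n L) * hA +
    (c * B * lProd l M n (L - 1) * qProd q (M + 1) n L) * hS +
    (c * B * lProd l M n (L - 1) * ((2 * l (M + 1))! : ℚ)) * hQ
end
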